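/- With F as in the previous context, if (v_1,v_4,v_5,v_8) satisfies v_1 = v_4 = v_5 = v_8 = √x for some x > 0, then the image (v_1',v_4',v_5',v_8') satisfies v_1' v_5' = v_4' v_8' = f(x), where f(x) = (c^4 + 3a^2b^2 x + 3a^4b^4 x^2 + a^6b^6c^4 x^3)/(b^6c^4 + 3a^2b^4 x + 3a^4b^2 x^2 + a^6c^4 x^3). -/

import Mathlib

/-! On the diagonal `v = (s, s, s, s)` every product `vᵢ vⱼ` occurring in `F` equals `s²`, so
`F v = (L P / k, k / (L Q), k / (L Q), L P / k)` with `k = (ab)³ c s³`, `P = fNum (s²)` and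
`Q = fDen (s²)`, where `f = fNum / fDen`. In the products `v₁'v₅'` and `v₄'v₈'` the factors `k`
and `L` cancel. -/

/-- The Gibbs recursion operator `F` on `(ℝ_{>0})^4`. -/
noncomputable def Fop (a b c L : ℝ) (v : ℝ × ℝ × ℝ × ℝ) : ℝ × ℝ × ℝ × ℝ :=
  let v1 := v.1; let v4 := v.2.1; let v5 := v.2.2.1; let v8 := v.2.2.2
  ( L * ((a*b)^6*c^4*(v1*v4)^3 + 3*(a*b)^4*(v1*v4)^2 + 3*(a*b)^2*(v1*v4) + c^4) /
      ((a*b)^3*c*v4^3),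
    (a*b)^3*c*v5^3 /
      (L * (b^6*c^4 + 3*a^2*b^4*(v5*v8) + 3*a^4*b^2*(v5*v8)^2 + c^4*a^6*(v5*v8)^3)),
    (a*b)^3*c*v4^3 /
      (L * (a^6*c^4*(v1*v4)^3 + 3*a^4*b^2*(v1*v4)^2 + 3*a^2*b^4*(v1*v4) + b^6*c^4)),
    L * (c^4 + 3*(a*b)^2*(v5*v8) + 3*(a*b)^4*(v5*v8)^2 + (a*b)^6*c^4*(v5*v8)^3) /
      ((a*b)^3*c*v5^3) )

def fNum (a b c t : ℝ) : ℝ := c^4 + 3*a^2*b^2*t + 3*a^4*b^4*t^2 + a^6*b^6*c^4*t^3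

def fDen (a b c t : ℝ) : ℝ := b^6*c^4 + 3*a^2*b^4*t + 3*a^4*b^2*t^2 + a^6*c^4*t^3

theorem Fop_diag (a b c L s : ℝ) :
    Fop a b c L (s, s, s, s) =
      (L * fNum a b c (s^2) / ((a*b)^3*c*s^3),
        (a*b)^3*c*s^3 / (L * fDen a b c (s^2)),
        (a*b)^3*c*s^3 / (L * fDen a b c (s^2)),
        L * fNum a b c (s^2) / ((a*b)^3*c*s^3)) := by
  simp only [Fop, fNum, fDen, Prod.mk.injEq]
  refine ⟨?_, ?_, ?_, ?_⟩ <;> ring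

theorem mul_div_mul_div_cancel {L k P Q : ℝ} (hL : L ≠ 0) (hk : k ≠ 0) :
    L * P / k * (k / (L * Q)) = P / Q := by
  rw [div_mul_div_cancel₀ hk, mul_div_mul_left P Q hL]

theorem diag_reduces_to_f (a b c L x : ℝ) (ha : 0 < a) (hb : 0 < b) (hc : 0 < c)
    (hL : 0 < L) (hx : 0 < x) :
    (Fop a b c L (Real.sqrt x, Real.sqrt x, Real.sqrt x, Real.sqrt x)).1 *
      (Fop a b c L (Real.sqrt x, Real.sqrt x, Real.sqrt x, Real.sqrt x)).2.2.1 =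
      (c^4 + 3*a^2*b^2*x + 3*a^4*b^4*x^2 + a^6*b^6*c^4*x^3) /
        (b^6*c^4 + 3*a^2*b^4*x + 3*a^4*b^2*x^2 + a^6*c^4*x^3) ∧
    (Fop a b c L (Real.sqrt x, Real.sqrt x, Real.sqrt x, Real.sqrt x)).2.1 *
      (Fop a b c L (Real.sqrt x, Real.sqrt x, Real.sqrt x, Real.sqrt x)).2.2.2 =
      (c^4 + 3*a^2*b^2*x + 3*a^4*b^4*x^2 + a^6*b^6*c^4*x^3) /
        (b^6*c^4 + 3*a^2*b^4*x + 3*a^4*b^2*x^2 + a^6*c^4*x^3) := by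
  have hk : (a*b)^3*c*Real.sqrt x^3 ≠ 0 := by
    have := Real.sqrt_pos.mpr hx
    positivity
  rw [Fop_diag, Real.sq_sqrt hx.le]
  exact ⟨mul_div_mul_div_cancel hL.ne' hk,
    (mul_comm _ _).trans (mul_div_mul_div_cancel hL.ne' hk)⟩
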